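/- Let β > 0, s ≥ 0 and n ∈ ℕ. Define Q_0(t) := exp( −(n/2) ∫_0^t (β+S_u) du ) and, recursively for 1 ≤ i ≤ n, Q_i(t) := ∫_0^t Q_{i−1}(r) · ((n−i+1)/2)(β+S_r) · exp( −((n−i)/2) ∫_r^t (β+S_u) du ) dr. Then for every 0 ≤ i ≤ n and every t ≥ 0: Q_i(t) = binom(n, i) p(t)^{n−i} (1 − p(t))^i. Hence the pure-death process which, in state k, jumps to k−1 at time-inhomogeneous rate k(β+S_t)/2, when started from n, is in state n−i at time t with the binomial probability Bin(n−i; n, p(t)) — the key fact yielding the binomial mixing weights in Proposition 4.2. -/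

import Mathlib

open MeasureTheory intervalIntegral

/-! With `D(t) = (β+s)e^{βt/2} - s` one has `β + S_t = 2D'(t)/D(t)`, so `p = β/D` solves
`p' = -((β+S)/2) p` with `p(0) = 1`: it is the survival probability of a single individual dying
at rate `(β+S)/2`, and `exp(-(k/2)∫_r^t (β+S)) = (p(t)/p(r))^k`. Inserting the induction
hypothesis, the integrand defining `Q_{i+1}(t)` becomes `binom(n,i)(n-i) p(t)^{n-i-1}` times
`(1-p)^i (-p')`, whose integral over `[0,t]` is `(1-p(t))^{i+1}/(i+1)`. -/

noncomputable def Sfun (β s t : ℝ) : ℝ :=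
  β * s / ((β + s) * Real.exp (β * t / 2) - s)

noncomputable def pfun (β s t : ℝ) : ℝ :=
  β / ((β + s) * Real.exp (β * t / 2) - s)

noncomputable def Qfun (β s : ℝ) (n : ℕ) : ℕ → ℝ → ℝ
  | 0, t => Real.exp (-((n : ℝ) / 2) * ∫ u in (0 : ℝ)..t, (β + Sfun β s u))
  | i + 1, t => ∫ r in (0 : ℝ)..t,
      Qfun β s n i r * (((n : ℝ) - (i : ℝ)) / 2 * (β + Sfun β s r)) *
        Real.exp (-(((n : ℝ) - (i : ℝ) - 1) / 2) * ∫ u in r..t, (β + Sfun β s u))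

lemma uIcc_subset_Ici_zero {r t : ℝ} (hr : 0 ≤ r) (ht : 0 ≤ t) : Set.uIcc r t ⊆ Set.Ici 0 :=
  fun _ hx => le_trans (le_min hr ht) hx.1

section SurvivalProbability

variable {rate P : ℝ → ℝ}

lemma integral_eq_two_mul_log_div (hrate : ContinuousOn rate (Set.Ici 0))
    (hP : ∀ u, 0 ≤ u → HasDerivAt P (-(rate u / 2 * P u)) u)
    (hPpos : ∀ u, 0 ≤ u → 0 < P u)
    {r t : ℝ} (hr : 0 ≤ r) (ht : 0 ≤ t) :
    ∫ u in r..t, rate u = 2 * Real.log (P r / P t) := by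
  have hderiv : ∀ u ∈ Set.uIcc r t, HasDerivAt (fun v => -2 * Real.log (P v)) (rate u) u := by
    intro u hu
    have hu0 : 0 ≤ u := uIcc_subset_Ici_zero hr ht hu
    refine (((hP u hu0).log (hPpos u hu0).ne').const_mul (-2)).congr_deriv ?_
    field_simp [(hPpos u hu0).ne']
  rw [integral_eq_sub_of_hasDerivAt hderiv
    ((hrate.mono (uIcc_subset_Ici_zero hr ht)).intervalIntegrable),
    Real.log_div (hPpos r hr).ne' (hPpos t ht).ne']
  ring

lemma exp_neg_mul_integral_eq_pow_div (hrate : ContinuousOn rate (Set.Ici 0))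
    (hP : ∀ u, 0 ≤ u → HasDerivAt P (-(rate u / 2 * P u)) u)
    (hPpos : ∀ u, 0 ≤ u → 0 < P u)
    (k : ℕ) {r t : ℝ} (hr : 0 ≤ r) (ht : 0 ≤ t) :
    Real.exp (-((k : ℝ) / 2) * ∫ u in r..t, rate u) = (P t / P r) ^ k := by
  have hpos : 0 < P t / P r := div_pos (hPpos t ht) (hPpos r hr)
  rw [integral_eq_two_mul_log_div hrate hP hPpos hr ht, ← inv_div (P t) (P r), Real.log_inv,
    show -((k : ℝ) / 2) * (2 * -Real.log (P t / P r)) = k * Real.log (P t / P r) by ring,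
    Real.exp_nat_mul, Real.exp_log hpos]

lemma integral_pow_one_sub_mul_eq (hrate : ContinuousOn rate (Set.Ici 0))
    (hP : ∀ u, 0 ≤ u → HasDerivAt P (-(rate u / 2 * P u)) u) (hP0 : P 0 = 1)
    (i : ℕ) {t : ℝ} (ht : 0 ≤ t) :
    ∫ r in (0 : ℝ)..t, (1 - P r) ^ i * (rate r / 2 * P r) = (1 - P t) ^ (i + 1) / (i + 1) := by
  have hderiv : ∀ r ∈ Set.uIcc 0 t, HasDerivAt (fun v => (1 - P v) ^ (i + 1) / (i + 1))
      ((1 - P r) ^ i * (rate r / 2 * P r)) r := by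
    intro r hr
    refine ((((hP r (uIcc_subset_Ici_zero le_rfl ht hr)).const_sub 1).pow (i + 1)).div_const
      ((i : ℝ) + 1)).congr_deriv ?_
    rw [Nat.add_sub_cancel]
    field_simp
    push_cast
    ring
  have hPcont : ContinuousOn P (Set.uIcc 0 t) := fun r hr =>
    (hP r (uIcc_subset_Ici_zero le_rfl ht hr)).continuousAt.continuousWithinAt
  have hcont : ContinuousOn (fun r => (1 - P r) ^ i * (rate r / 2 * P r)) (Set.uIcc 0 t) :=
    ((continuousOn_const.sub hPcont).pow i).mul
      (((hrate.mono (uIcc_subset_Ici_zero le_rfl ht)).div_const 2).mul hPcont)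
  rw [integral_eq_sub_of_hasDerivAt hderiv hcont.intervalIntegrable, hP0]
  simp

lemma integral_binomial_step (hrate : ContinuousOn rate (Set.Ici 0))
    (hP : ∀ u, 0 ≤ u → HasDerivAt P (-(rate u / 2 * P u)) u)
    (hPpos : ∀ u, 0 ≤ u → 0 < P u)
    (hP0 : P 0 = 1) (i m : ℕ) {t : ℝ} (ht : 0 ≤ t) :
    ∫ r in (0 : ℝ)..t, (i + 1 + m).choose i * P r ^ (m + 1) * (1 - P r) ^ i *
        (((m : ℝ) + 1) / 2 * rate r) * Real.exp (-((m : ℝ) / 2) * ∫ u in r..t, rate u) =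
      (i + 1 + m).choose (i + 1) * P t ^ m * (1 - P t) ^ (i + 1) := by
  have hintegrand : Set.EqOn
      (fun r => (i + 1 + m).choose i * P r ^ (m + 1) * (1 - P r) ^ i *
        (((m : ℝ) + 1) / 2 * rate r) * Real.exp (-((m : ℝ) / 2) * ∫ u in r..t, rate u))
      (fun r => (i + 1 + m).choose i * (m + 1) * P t ^ m * ((1 - P r) ^ i * (rate r / 2 * P r)))
      (Set.uIcc 0 t) := by
    intro r hr
    have hr0 : 0 ≤ r := uIcc_subset_Ici_zero le_rfl ht hr
    have := hPpos r hr0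
    dsimp only
    rw [exp_neg_mul_integral_eq_pow_div hrate hP hPpos m hr0 ht, div_pow]
    field_simp
    ring
  have hchoose :
      ((i + 1 + m).choose (i + 1) : ℝ) * (i + 1) = (i + 1 + m).choose i * (m + 1) := by
    exact_mod_cast (Nat.choose_succ_right_eq (i + 1 + m) i).trans (by congr 1; omega)
  rw [integral_congr hintegrand, intervalIntegral.integral_const_mul,
    integral_pow_one_sub_mul_eq hrate hP hP0 i ht, ← hchoose]
  field_simp

end SurvivalProbability

lemma pfun_denom_pos {β s : ℝ} (hβ : 0 < β) (hs : 0 ≤ s) {t : ℝ} (ht : 0 ≤ t) :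
    0 < (β + s) * Real.exp (β * t / 2) - s := by
  have : 1 ≤ Real.exp (β * t / 2) := Real.one_le_exp (by positivity)
  nlinarith

lemma pfun_pos {β s : ℝ} (hβ : 0 < β) (hs : 0 ≤ s) {t : ℝ} (ht : 0 ≤ t) :
    0 < pfun β s t :=
  div_pos hβ (pfun_denom_pos hβ hs ht)

lemma pfun_zero {β : ℝ} (hβ : β ≠ 0) (s : ℝ) : pfun β s 0 = 1 := by
  simp [pfun, hβ]

lemma continuousOn_add_Sfun {β s : ℝ} (hβ : 0 < β) (hs : 0 ≤ s) :
    ContinuousOn (fun u => β + Sfun β s u) (Set.Ici 0) :=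
  continuousOn_const.add <| continuousOn_const.div (by fun_prop)
    fun _ hu => (pfun_denom_pos hβ hs hu).ne'

lemma hasDerivAt_pfun {β s : ℝ} (hβ : 0 < β) (hs : 0 ≤ s) {t : ℝ} (ht : 0 ≤ t) :
    HasDerivAt (pfun β s) (-((β + Sfun β s t) / 2 * pfun β s t)) t := by
  have hD := pfun_denom_pos hβ hs ht
  have hlin : HasDerivAt (fun u : ℝ => β * u / 2) (β / 2) t := by
    simpa using ((hasDerivAt_id t).const_mul β).div_const 2
  refine ((hasDerivAt_const t β).div ((hlin.exp.const_mul (β + s)).sub_const s)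
    hD.ne').congr_deriv ?_
  unfold Sfun pfun
  field_simp
  ring

/-- The pure-death process started from `n` is in state `n - i` at time `t` with binomial
probability `Bin(n-i; n, p(t))` — the key fact yielding the binomial mixing weights in
Proposition 4.2. -/
theorem stmt9 (β : ℝ) (hβ : 0 < β) (s : ℝ) (hs : 0 ≤ s) (n : ℕ) :
    ∀ i : ℕ, i ≤ n → ∀ t : ℝ, 0 ≤ t →
      Qfun β s n i t = (n.choose i : ℝ) * pfun β s t ^ (n - i) * (1 - pfun β s t) ^ i := by
  have hrate := continuousOn_add_Sfun hβ hs
  have hP : ∀ u, 0 ≤ u → HasDerivAt (pfun β s) (-((β + Sfun β s u) / 2 * pfun β s u)) u :=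
    fun _ hu => hasDerivAt_pfun hβ hs hu
  have hPpos : ∀ u, 0 ≤ u → 0 < pfun β s u := fun _ hu => pfun_pos hβ hs hu
  intro i
  induction i with
  | zero =>
    intro _ t ht
    rw [Qfun, exp_neg_mul_integral_eq_pow_div hrate hP hPpos n le_rfl ht, pfun_zero hβ.ne']
    simp
  | succ i ih =>
    intro hi t ht
    obtain ⟨m, rfl⟩ : ∃ m, n = i + 1 + m := ⟨n - (i + 1), by omega⟩
    rw [Qfun, show i + 1 + m - (i + 1) = m by omega,
      ← integral_binomial_step hrate hP hPpos (pfun_zero hβ.ne' s) i m ht]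
    refine integral_congr fun r hr => ?_
    rw [ih (by omega) r (uIcc_subset_Ici_zero le_rfl ht hr), show i + 1 + m - i = m + 1 by omega]
    push_cast
    ring_nf
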